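/- Let μ be a nonzero locally finite Borel measure on ℂ whose support is contained in the ray [x', ∞) ⊂ ℝ, with x' ∈ supp(μ), and such that ∫ 1/(1+|ξ|²) dμ(ξ) < ∞. Then the function t ↦ ∫_ℂ [1/((x'−t)−ξ) − 1/(z₀−ξ)] dμ(ξ) (for a fixed z₀ ∉ supp(μ)) is not constant on (0,∞); indeed its derivative in t at any t > 0 equals ∫ 1/(x'−t−ξ)² dμ(ξ), which is strictly positive. -/

import Mathlib

/-!
Away from the support of `μ`, the transform `w ↦ ∫ ((w - ξ)⁻¹ - (z₀ - ξ)⁻¹) dμ(ξ)` is complex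
differentiable with derivative `-∫ (w - ξ)⁻² dμ(ξ)`: once `‖w - ξ‖` is bounded below, the weight
`(1 + ‖ξ‖²)⁻¹` dominates `(w - ξ)⁻²` locally uniformly in `w`, and the difference of the two
resolvents is at most `‖w - z₀‖` times the sum of their squares. Along `w = x' - t` with `t > 0`,
every point of the ray is at distance at least `t`, and `(x' - t - ξ)⁻²` is a positive real there,
so the derivative in `t` is a positive real and the function cannot be constant.
-/

open MeasureTheory Metric

/-- The support of a measure. -/
def msupp (μ : Measure ℂ) : Set ℂ := {z : ℂ | ∀ r : ℝ, 0 < r → 0 < μ (ball z r)}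

lemma one_add_sq_norm_le_mul_sq_norm_sub {E : Type*} [SeminormedAddCommGroup E] {w ξ : E}
    {R δ : ℝ} (hw : ‖w‖ ≤ R) (hδ : 0 < δ) (h : δ ≤ ‖w - ξ‖) :
    1 + ‖ξ‖ ^ 2 ≤ ((1 + 2 * R ^ 2) / δ ^ 2 + 2) * ‖w - ξ‖ ^ 2 := by
  have hξ : ‖ξ‖ ≤ R + ‖w - ξ‖ := by
    calc ‖ξ‖ ≤ ‖w‖ + ‖w - ξ‖ := norm_le_norm_add_norm_sub' ξ w |>.trans_eq (by rw [norm_sub_rev])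
      _ ≤ R + ‖w - ξ‖ := by gcongr
  have hconst : 1 + 2 * R ^ 2 ≤ (1 + 2 * R ^ 2) / δ ^ 2 * ‖w - ξ‖ ^ 2 := by
    rw [div_mul_eq_mul_div, le_div_iff₀ (by positivity)]
    gcongr
  nlinarith [norm_nonneg w, norm_nonneg ξ, sq_nonneg (R - ‖w - ξ‖)]

lemma norm_inv_sub_sq_le {𝕜 : Type*} [NormedDivisionRing 𝕜] {w ξ : 𝕜} {R δ : ℝ}
    (hw : ‖w‖ ≤ R) (hδ : 0 < δ) (h : δ ≤ ‖w - ξ‖) :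
    ‖((w - ξ)⁻¹) ^ 2‖ ≤ ((1 + 2 * R ^ 2) / δ ^ 2 + 2) * (1 / (1 + ‖ξ‖ ^ 2)) := by
  rw [norm_pow, norm_inv, inv_pow, mul_one_div, le_div_iff₀ (by positivity),
    inv_mul_le_iff₀ (pow_pos (hδ.trans_le h) 2), mul_comm]
  exact one_add_sq_norm_le_mul_sq_norm_sub hw hδ h

lemma norm_inv_sub_inv_le {𝕜 : Type*} [NormedDivisionRing 𝕜] (a b : 𝕜) :
    ‖a⁻¹ - b⁻¹‖ ≤ ‖a - b‖ * (‖a⁻¹ ^ 2‖ + ‖b⁻¹ ^ 2‖) := by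
  rcases eq_or_ne a 0 with rfl | ha
  · rcases eq_or_ne b 0 with rfl | hb
    · simp
    · simp [norm_inv, sq, hb]
  rcases eq_or_ne b 0 with rfl | hb
  · simp [norm_inv, sq, ha]
  rw [inv_sub_inv' ha hb, norm_mul, norm_mul, norm_sub_rev, norm_pow, norm_pow]
  nlinarith [sq_nonneg (‖a⁻¹‖ - ‖b⁻¹‖), norm_nonneg (a - b), norm_nonneg a⁻¹, norm_nonneg b⁻¹]

lemma integral_pos_of_ae_pos {α : Type*} [MeasurableSpace α] {μ : Measure α} {f : α → ℝ}
    (hμ : μ ≠ 0) (hfi : Integrable f μ) (hf : ∀ᵐ x ∂μ, 0 < f x) : 0 < ∫ x, f x ∂μ := by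
  rw [integral_pos_iff_support_of_nonneg_ae (hf.mono fun _ hx => hx.le) hfi]
  exact (Measure.measure_univ_pos.mpr hμ).trans_le
    (measure_mono_ae (hf.mono fun _ hx _ => hx.ne'))

section CauchyTransform

variable {μ : Measure ℂ}

lemma integrable_one_div_one_add_sq_norm
    (hμ : ∫⁻ ξ, ENNReal.ofReal (1 / (1 + ‖ξ‖ ^ 2)) ∂μ < ⊤) :
    Integrable (fun ξ : ℂ => 1 / (1 + ‖ξ‖ ^ 2)) μ :=
  ⟨(continuous_const.div (by fun_prop) fun _ => by positivity).aestronglyMeasurable,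
    (hasFiniteIntegral_iff_ofReal (ae_of_all _ fun _ => by positivity)).mpr hμ⟩

lemma exists_ae_le_norm_sub_of_notMem_msupp {z : ℂ} (hz : z ∉ msupp μ) :
    ∃ r : ℝ, 0 < r ∧ ∀ᵐ ξ ∂μ, r ≤ ‖z - ξ‖ := by
  obtain ⟨r, hr, hball⟩ : ∃ r : ℝ, 0 < r ∧ μ (ball z r) = 0 := by
    by_contra! h
    exact hz fun r hr => pos_iff_ne_zero.mpr (h r hr)
  refine ⟨r, hr, (measure_eq_zero_iff_ae_notMem.mp hball).mono fun ξ hξ => ?_⟩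
  rwa [mem_ball, not_lt, dist_eq_norm, norm_sub_rev] at hξ

variable (hμ : Integrable (fun ξ : ℂ => 1 / (1 + ‖ξ‖ ^ 2)) μ)
include hμ

lemma integrable_inv_sub_sq {w : ℂ} {δ : ℝ} (hδ : 0 < δ) (hw : ∀ᵐ ξ ∂μ, δ ≤ ‖w - ξ‖) :
    Integrable (fun ξ => ((w - ξ)⁻¹) ^ 2) μ :=
  (hμ.const_mul _).mono' (by fun_prop : Measurable fun ξ => ((w - ξ)⁻¹) ^ 2).aestronglyMeasurable
    (hw.mono fun _ hξ => norm_inv_sub_sq_le le_rfl hδ hξ)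

lemma integrable_inv_sub_sub_inv_sub {w z : ℂ} {δ r : ℝ} (hδ : 0 < δ) (hr : 0 < r)
    (hw : ∀ᵐ ξ ∂μ, δ ≤ ‖w - ξ‖) (hz : ∀ᵐ ξ ∂μ, r ≤ ‖z - ξ‖) :
    Integrable (fun ξ => (w - ξ)⁻¹ - (z - ξ)⁻¹) μ := by
  refine (((integrable_inv_sub_sq hμ hδ hw).norm.add
    (integrable_inv_sub_sq hμ hr hz).norm).const_mul ‖w - z‖).mono'
    (by fun_prop : Measurable fun ξ => (w - ξ)⁻¹ - (z - ξ)⁻¹).aestronglyMeasurable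
    (ae_of_all _ fun ξ => ?_)
  simpa only [sub_sub_sub_cancel_right, Pi.add_apply] using norm_inv_sub_inv_le (w - ξ) (z - ξ)

theorem hasDerivAt_integral_inv_sub_sub_inv_sub {w₀ z : ℂ} {δ r : ℝ} (hδ : 0 < δ) (hr : 0 < r)
    (hw₀ : ∀ᵐ ξ ∂μ, δ ≤ ‖w₀ - ξ‖) (hz : ∀ᵐ ξ ∂μ, r ≤ ‖z - ξ‖) :
    HasDerivAt (fun w => ∫ ξ, ((w - ξ)⁻¹ - (z - ξ)⁻¹) ∂μ)
      (-∫ ξ, ((w₀ - ξ)⁻¹) ^ 2 ∂μ) w₀ := by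
  have hnear : ∀ᵐ ξ ∂μ, ∀ w ∈ ball w₀ (δ / 2), δ / 2 ≤ ‖w - ξ‖ :=
    hw₀.mono fun ξ hξ w hw => by
      have := norm_sub_le_norm_sub_add_norm_sub w₀ w ξ
      rw [mem_ball, dist_eq_norm, norm_sub_rev] at hw
      linarith
  have hbound : ∀ w ∈ ball w₀ (δ / 2), ‖w‖ ≤ ‖w₀‖ + δ / 2 := fun w hw =>
    norm_le_norm_add_const_of_dist_le (mem_ball.mp hw).le
  have h := hasDerivAt_integral_of_dominated_loc_of_deriv_le
    (F := fun w ξ => (w - ξ)⁻¹ - (z - ξ)⁻¹) (F' := fun w ξ => -((w - ξ)⁻¹) ^ 2)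
    (ball_mem_nhds w₀ (half_pos hδ))
    (Filter.Eventually.of_forall fun w =>
      (by fun_prop : Measurable fun ξ => (w - ξ)⁻¹ - (z - ξ)⁻¹).aestronglyMeasurable)
    (integrable_inv_sub_sub_inv_sub hμ hδ hr hw₀ hz)
    (by fun_prop : Measurable fun ξ => -((w₀ - ξ)⁻¹) ^ 2).aestronglyMeasurable
    (hnear.mono fun ξ hξ w hw => by
      simpa only [norm_neg] using norm_inv_sub_sq_le (hbound w hw) (half_pos hδ) (hξ w hw))
    (hμ.const_mul _)
    (hnear.mono fun ξ hξ w hw => by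
      have hne : w - ξ ≠ 0 := norm_pos_iff.mp ((half_pos hδ).trans_le (hξ w hw))
      exact ((((hasDerivAt_id' w).sub_const ξ).inv hne).sub_const _).congr_deriv
        (by rw [neg_div, one_div, inv_pow]))
  simpa only [integral_neg] using h.2

end CauchyTransform

lemma re_integral_pos_and_im_integral_eq_zero {α : Type*} [MeasurableSpace α] {μ : Measure α}
    {f : α → ℂ} (hμ : μ ≠ 0) (hf : Integrable f μ)
    (hfpos : ∀ᵐ x ∂μ, 0 < (f x).re ∧ (f x).im = 0) :
    0 < (∫ x, f x ∂μ).re ∧ (∫ x, f x ∂μ).im = 0 := by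
  have hre := integral_re hf
  have him := integral_im hf
  simp only [RCLike.re_to_complex, RCLike.im_to_complex] at hre him
  exact ⟨hre ▸ integral_pos_of_ae_pos hμ hf.re (hfpos.mono fun _ h => h.1),
    him ▸ integral_eq_zero_of_ae (hfpos.mono fun _ h => h.2)⟩

lemma re_inv_sq_pos_and_im_eq_zero {a : ℂ} (ha : a.im = 0) (ha₀ : a ≠ 0) :
    0 < (a⁻¹ ^ 2).re ∧ (a⁻¹ ^ 2).im = 0 := by
  rw [← Complex.re_add_im a, ha, Complex.ofReal_zero, zero_mul, add_zero] at ha₀ ⊢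
  rw [← Complex.ofReal_inv, ← Complex.ofReal_pow, Complex.ofReal_re, Complex.ofReal_im]
  have : a.re ≠ 0 := Complex.ofReal_ne_zero.mp ha₀
  exact ⟨by positivity, rfl⟩

lemma le_norm_sub_of_mem_ray {x' t : ℝ} {ξ : ℂ} (hξ : ξ.im = 0 ∧ x' ≤ ξ.re) :
    t ≤ ‖(x' : ℂ) - t - ξ‖ :=
  calc t ≤ |((x' : ℂ) - t - ξ).re| := by
        rw [Complex.sub_re, Complex.sub_re, Complex.ofReal_re, Complex.ofReal_re]
        exact le_abs.mpr (Or.inr (by linarith [hξ.2]))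
    _ ≤ ‖(x' : ℂ) - t - ξ‖ := Complex.abs_re_le_norm _

theorem not_constant_on_ray_general (μ : Measure ℂ) (hμ : μ ≠ 0) (x' : ℝ)
    (hnull : μ ({ζ : ℂ | ζ.im = 0 ∧ x' ≤ ζ.re}ᶜ) = 0)
    (hint : ∫⁻ ξ, ENNReal.ofReal (1 / (1 + ‖ξ‖ ^ 2)) ∂μ < ⊤)
    (z₀ : ℂ) (hz₀ : z₀ ∉ msupp μ)
    (F : ℝ → ℂ)
    (hF : ∀ t : ℝ, F t = ∫ ξ, ((((x' : ℂ) - t) - ξ)⁻¹ - (z₀ - ξ)⁻¹) ∂μ) :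
    (∀ t : ℝ, 0 < t →
      HasDerivAt F (∫ ξ, ((((x' : ℂ) - t) - ξ)⁻¹) ^ 2 ∂μ) t ∧
      0 < (∫ ξ, ((((x' : ℂ) - t) - ξ)⁻¹) ^ 2 ∂μ).re ∧
      (∫ ξ, ((((x' : ℂ) - t) - ξ)⁻¹) ^ 2 ∂μ).im = 0) ∧
    ¬ (∀ s t : ℝ, 0 < s → 0 < t → F s = F t) := by
  have hμint := integrable_one_div_one_add_sq_norm hint
  obtain ⟨r, hr, hz₀r⟩ := exists_ae_le_norm_sub_of_notMem_msupp hz₀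
  have hray : ∀ᵐ ξ ∂μ, ξ.im = 0 ∧ x' ≤ ξ.re := measure_eq_zero_iff_ae_notMem.mp hnull |>.mono
    fun _ h => not_not.mp h
  have hdist (t : ℝ) : ∀ᵐ ξ ∂μ, t ≤ ‖(x' : ℂ) - t - ξ‖ := hray.mono fun _ => le_norm_sub_of_mem_ray
  have hderiv (t : ℝ) (ht : 0 < t) : HasDerivAt F (∫ ξ, ((((x' : ℂ) - t) - ξ)⁻¹) ^ 2 ∂μ) t := by
    have hline : HasDerivAt (fun s : ℝ => (x' : ℂ) - s) (-1) t :=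
      ((hasDerivAt_id t).ofReal_comp).const_sub _
    simpa only [funext hF, Function.comp_def, mul_neg_one, neg_neg] using
      (hasDerivAt_integral_inv_sub_sub_inv_sub hμint ht hr (hdist t) hz₀r).comp t hline
  have hpos (t : ℝ) (ht : 0 < t) : 0 < (∫ ξ, ((((x' : ℂ) - t) - ξ)⁻¹) ^ 2 ∂μ).re ∧
      (∫ ξ, ((((x' : ℂ) - t) - ξ)⁻¹) ^ 2 ∂μ).im = 0 :=
    re_integral_pos_and_im_integral_eq_zero hμ (integrable_inv_sub_sq hμint ht (hdist t)) <|
      (hray.and (hdist t)).mono fun ξ hξ =>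
        re_inv_sq_pos_and_im_eq_zero (by simp [hξ.1.1]) (norm_pos_iff.mp (ht.trans_le hξ.2))
  refine ⟨fun t ht => ⟨hderiv t ht, hpos t ht⟩, fun hconst => ?_⟩
  have hzero : HasDerivAt F 0 1 := (hasDerivAt_const (1 : ℝ) (F 1)).congr_of_eventuallyEq <|
    (eventually_gt_nhds one_pos).mono fun s hs => hconst s 1 hs one_pos
  have := (hpos 1 one_pos).1
  rw [(hderiv 1 one_pos).unique hzero, Complex.zero_re] at this
  exact this.false

theorem not_constant_on_ray (μ : Measure ℂ) (hμ : μ ≠ 0) (x' : ℝ)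
    (hsupp : msupp μ ⊆ {ζ : ℂ | ζ.im = 0 ∧ x' ≤ ζ.re})
    (hnull : μ ({ζ : ℂ | ζ.im = 0 ∧ x' ≤ ζ.re}ᶜ) = 0)
    (hx' : (x' : ℂ) ∈ msupp μ)
    (hint : ∫⁻ ξ, ENNReal.ofReal (1 / (1 + ‖ξ‖ ^ 2)) ∂μ < ⊤)
    (z₀ : ℂ) (hz₀ : z₀ ∉ msupp μ)
    (F : ℝ → ℂ)
    (hF : ∀ t : ℝ, F t = ∫ ξ, ((((x' : ℂ) - t) - ξ)⁻¹ - (z₀ - ξ)⁻¹) ∂μ) :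
    (∀ t : ℝ, 0 < t →
      HasDerivAt F (∫ ξ, ((((x' : ℂ) - t) - ξ)⁻¹) ^ 2 ∂μ) t ∧
      0 < (∫ ξ, ((((x' : ℂ) - t) - ξ)⁻¹) ^ 2 ∂μ).re ∧
      (∫ ξ, ((((x' : ℂ) - t) - ξ)⁻¹) ^ 2 ∂μ).im = 0) ∧
    ¬ (∀ s t : ℝ, 0 < s → 0 < t → F s = F t) :=
  not_constant_on_ray_general μ hμ x' hnull hint z₀ hz₀ F hF
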